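/- Let u_1, ..., u_{n+1} ∈ S^{n-1} with affine hull equal to R^n, and for each j let A_j be the affine hull of the remaining n points, a hyperplane {x : ⟨x, v^j⟩ = β_j}. Then for any further points u_{n+2}, ..., u_m ∈ S^{n-1}, the polynomial p(u) = Σ_{j=1}^{n+1} (⟨u, v^j⟩ − β_j)^2 (1 − ⟨u, u_j⟩) Π_{k=n+2}^{m} (1 − ⟨u, u_k⟩) is nonnegative on S^{n-1}, has degree at most m − n + 2, vanishes at u_1, ..., u_m, and is strictly positive at every other point of S^{n-1}. -/

import Mathlib

open MeasureTheory Metric Real Filter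
open scoped InnerProductSpace ENNReal NNReal Topology

noncomputable section

abbrev En (n : ℕ) := EuclideanSpace ℝ (Fin n)

abbrev Sph (n : ℕ) : Set (En n) := Metric.sphere 0 1

/-! The summand of index `j` is a product of factors that are nonnegative on the sphere:
a square, and terms `1 - ⟪u, u_k⟫`, which vanish exactly at `u = u_k`. The square vanishes
on the facet hyperplane `A_j` of the simplex spanned by `u_1, …, u_{n+1}`, so every summand
vanishes at each `u_k`. Conversely, a point off all `u_k` lies outside some `A_j`, because
the barycentric coordinates of a point sum to one and the `j`-th one vanishes on `A_j`;
the `j`-th summand is then positive. -/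

section AffineFacets

variable {ι k V P : Type*} [AddCommGroup V] [AddTorsor V P]

theorem affineIndependent_of_affineSpan_eq_top_of_card_eq_finrank_add_one [DivisionRing k]
    [Module k V] [FiniteDimensional k V] [Fintype ι] {p : ι → P}
    (htot : affineSpan k (Set.range p) = ⊤) (hc : Fintype.card ι = Module.finrank k V + 1) :
    AffineIndependent k p := by
  rw [affineIndependent_iff_le_finrank_vectorSpan k p hc,
    AffineSubspace.vectorSpan_eq_top_of_affineSpan_eq_top k V P htot, finrank_top]

variable [Ring k] [Module k V]

theorem AffineBasis.coord_eq_zero_of_mem_affineSpan_facet (b : AffineBasis ι k P) {j : ι}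
    {q : P} (hq : q ∈ affineSpan k (b '' {i | i ≠ j})) : b.coord j q = 0 := by
  have hle : affineSpan k (b '' {i | i ≠ j}) ≤
      (affineSpan k ({0} : Set k)).comap (b.coord j) := by
    rw [affineSpan_le]
    rintro _ ⟨i, hij, rfl⟩
    rw [SetLike.mem_coe, AffineSubspace.mem_comap, b.coord_apply_ne (Ne.symm hij)]
    exact mem_affineSpan k rfl
  simpa using (AffineSubspace.mem_affineSpan_singleton k _).mp (hle hq)

theorem AffineBasis.exists_notMem_affineSpan_facet [Nontrivial k] [Fintype ι]
    (b : AffineBasis ι k P) (q : P) : ∃ j, q ∉ affineSpan k (b '' {i | i ≠ j}) := by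
  by_contra! h
  have hsum := b.sum_coord_apply_eq_one q
  simp only [b.coord_eq_zero_of_mem_affineSpan_facet (h _), Finset.sum_const_zero] at hsum
  exact zero_ne_one hsum

end AffineFacets

section UnitSphere

variable {F : Type*} [NormedAddCommGroup F] [InnerProductSpace ℝ F] {x y : F}

theorem one_sub_inner_nonneg_of_mem_sphere (hx : x ∈ sphere (0 : F) 1)
    (hy : y ∈ sphere (0 : F) 1) : 0 ≤ 1 - ⟪x, y⟫_ℝ :=
  sub_nonneg.mpr (real_inner_le_one_of_norm_eq_one (by simpa using hx) (by simpa using hy))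

theorem one_sub_inner_pos_of_mem_sphere (hx : x ∈ sphere (0 : F) 1)
    (hy : y ∈ sphere (0 : F) 1) (hxy : x ≠ y) : 0 < 1 - ⟪x, y⟫_ℝ :=
  sub_pos.mpr <|
    (inner_lt_one_iff_real_of_norm_eq_one (by simpa using hx) (by simpa using hy)).mpr hxy

theorem one_sub_inner_self_of_mem_sphere (hx : x ∈ sphere (0 : F) 1) : 1 - ⟪x, x⟫_ℝ = 0 := by
  rw [real_inner_self_eq_norm_sq, mem_sphere_zero_iff_norm.mp hx]
  norm_num

end UnitSphere

section PolynomialFunctions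

variable {σ : Type*}

def IsPolyOfDegreeLE (d : ℕ) (f : EuclideanSpace ℝ σ → ℝ) : Prop :=
  ∃ P : MvPolynomial σ ℝ, P.totalDegree ≤ d ∧ ∀ x, MvPolynomial.eval (fun i => x i) P = f x

namespace IsPolyOfDegreeLE

variable {d e : ℕ} {f g : EuclideanSpace ℝ σ → ℝ}

theorem mono (hf : IsPolyOfDegreeLE d f) (hde : d ≤ e) : IsPolyOfDegreeLE e f :=
  let ⟨P, hP, hPf⟩ := hf
  ⟨P, hP.trans hde, hPf⟩

theorem const (c : ℝ) : IsPolyOfDegreeLE d fun _ : EuclideanSpace ℝ σ => c :=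
  ⟨MvPolynomial.C c, by simp, by simp⟩

theorem inner_left [Fintype σ] (a : EuclideanSpace ℝ σ) :
    IsPolyOfDegreeLE 1 fun x => ⟪x, a⟫_ℝ := by
  refine ⟨∑ i, MvPolynomial.C (a i) * MvPolynomial.X i, ?_, fun x => ?_⟩
  · refine MvPolynomial.totalDegree_finsetSum_le fun i _ => ?_
    refine (MvPolynomial.totalDegree_mul _ _).trans ?_
    simp [MvPolynomial.totalDegree_X]
  · simp [PiLp.inner_apply, mul_comm]

theorem sub (hf : IsPolyOfDegreeLE d f) (hg : IsPolyOfDegreeLE d g) :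
    IsPolyOfDegreeLE d fun x => f x - g x :=
  let ⟨P, hP, hPf⟩ := hf
  let ⟨Q, hQ, hQg⟩ := hg
  ⟨P - Q, (MvPolynomial.totalDegree_sub P Q).trans (max_le hP hQ), by simp [hPf, hQg]⟩

theorem mul (hf : IsPolyOfDegreeLE d f) (hg : IsPolyOfDegreeLE e g) :
    IsPolyOfDegreeLE (d + e) fun x => f x * g x :=
  let ⟨P, hP, hPf⟩ := hf
  let ⟨Q, hQ, hQg⟩ := hg
  ⟨P * Q, (MvPolynomial.totalDegree_mul P Q).trans (add_le_add hP hQ), by simp [hPf, hQg]⟩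

theorem pow (hf : IsPolyOfDegreeLE d f) (m : ℕ) : IsPolyOfDegreeLE (m * d) fun x => f x ^ m :=
  let ⟨P, hP, hPf⟩ := hf
  ⟨P ^ m, (MvPolynomial.totalDegree_pow P m).trans (Nat.mul_le_mul_left m hP), by simp [hPf]⟩

theorem sum {ι : Type*} [Fintype ι] {f : ι → EuclideanSpace ℝ σ → ℝ}
    (hf : ∀ i, IsPolyOfDegreeLE d (f i)) : IsPolyOfDegreeLE d fun x => ∑ i, f i x := by
  choose P hP hPf using hf
  exact ⟨∑ i, P i, MvPolynomial.totalDegree_finsetSum_le fun i _ => hP i, by simp [hPf]⟩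

theorem prod {ι : Type*} [Fintype ι] {f : ι → EuclideanSpace ℝ σ → ℝ} {d : ι → ℕ}
    (hf : ∀ i, IsPolyOfDegreeLE (d i) (f i)) :
    IsPolyOfDegreeLE (∑ i, d i) fun x => ∏ i, f i x := by
  choose P hP hPf using hf
  exact ⟨∏ i, P i, (MvPolynomial.totalDegree_finsetProd _ _).trans (Finset.sum_le_sum
    fun i _ => hP i), by simp [hPf]⟩

end IsPolyOfDegreeLE

theorem isPolyOfDegreeLE_sum_sq_mul_prod_one_sub_inner [Fintype σ] {ι : Type*} [Fintype ι]
    {k : ℕ} (v w : ι → EuclideanSpace ℝ σ) (β : ι → ℝ) (u : Fin k → EuclideanSpace ℝ σ) :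
    IsPolyOfDegreeLE (k + 3) fun x =>
      ∑ j, (⟪x, v j⟫_ℝ - β j) ^ 2 * (1 - ⟪x, w j⟫_ℝ) * ∏ t, (1 - ⟪x, u t⟫_ℝ) := by
  have hprod := IsPolyOfDegreeLE.prod fun t =>
    (IsPolyOfDegreeLE.const 1).sub (IsPolyOfDegreeLE.inner_left (u t))
  have hterm (j : ι) := ((((IsPolyOfDegreeLE.inner_left (v j)).sub
    (IsPolyOfDegreeLE.const (β j))).pow 2).mul
      ((IsPolyOfDegreeLE.const 1).sub (IsPolyOfDegreeLE.inner_left (w j)))).mul hprod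
  exact IsPolyOfDegreeLE.sum fun j => (hterm j).mono (by simp [add_comm])

end PolynomialFunctions

theorem stmt2 {n : ℕ} (k : ℕ)
    (w : Fin (n + 1) → Sph n) (v : Fin (n + 1) → Sph n) (β : Fin (n + 1) → ℝ)
    (haff : affineSpan ℝ (Set.range fun j => ((w j : En n))) = ⊤)
    (hA : ∀ j, {x : En n | ⟪x, (v j : En n)⟫_ℝ = β j}
      = (affineSpan ℝ ((fun i => (w i : En n)) '' {i | i ≠ j}) : Set (En n)))
    (extra : Fin k → Sph n)
    (p : En n → ℝ)
    (hp : p = fun x => ∑ j, (⟪x, (v j : En n)⟫_ℝ - β j) ^ 2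
        * (1 - ⟪x, (w j : En n)⟫_ℝ) * ∏ t, (1 - ⟪x, (extra t : En n)⟫_ℝ)) :
    (∀ x ∈ Sph n, 0 ≤ p x) ∧
    (∃ P : MvPolynomial (Fin n) ℝ, P.totalDegree ≤ k + 3 ∧
      ∀ x : En n, MvPolynomial.eval (fun i => x i) P = p x) ∧
    (∀ j, p (w j) = 0) ∧ (∀ t, p (extra t) = 0) ∧
    (∀ x ∈ Sph n, (∀ j, x ≠ (w j : En n)) → (∀ t, x ≠ (extra t : En n)) → 0 < p x) := by
  subst hp
  let b : AffineBasis (Fin (n + 1)) ℝ (En n) :=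
    ⟨fun j => w j, affineIndependent_of_affineSpan_eq_top_of_card_eq_finrank_add_one haff
      (by simp), haff⟩
  have hmem_facet_iff (j : Fin (n + 1)) (x : En n) :
      ⟪x, (v j : En n)⟫_ℝ = β j ↔ x ∈ affineSpan ℝ (b '' {i | i ≠ j}) :=
    Set.ext_iff.mp (hA j) x
  have hw_facet (i j : Fin (n + 1)) (hij : i ≠ j) : ⟪(w j : En n), (v i : En n)⟫_ℝ = β i :=
    (hmem_facet_iff i _).mpr (subset_affineSpan ℝ _ ⟨j, Ne.symm hij, rfl⟩)
  have hterm_nonneg (x : En n) (hx : x ∈ Sph n) (j : Fin (n + 1)) :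
      0 ≤ (⟪x, (v j : En n)⟫_ℝ - β j) ^ 2 * (1 - ⟪x, (w j : En n)⟫_ℝ)
        * ∏ t, (1 - ⟪x, (extra t : En n)⟫_ℝ) :=
    mul_nonneg (mul_nonneg (sq_nonneg _) (one_sub_inner_nonneg_of_mem_sphere hx (w j).2))
      (Finset.prod_nonneg fun t _ => one_sub_inner_nonneg_of_mem_sphere hx (extra t).2)
  refine ⟨fun x hx => Finset.sum_nonneg fun j _ => hterm_nonneg x hx j, ?_, fun j => ?_,
    fun t => ?_, fun x hx hxw hxe => ?_⟩
  · exact isPolyOfDegreeLE_sum_sq_mul_prod_one_sub_inner _ _ _ _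
  · refine Finset.sum_eq_zero fun i _ => ?_
    obtain rfl | hij := eq_or_ne i j
    · rw [one_sub_inner_self_of_mem_sphere (w i).2, mul_zero, zero_mul]
    · simp [hw_facet i j hij]
  · refine Finset.sum_eq_zero fun j _ => ?_
    rw [Finset.prod_eq_zero (Finset.mem_univ t) (one_sub_inner_self_of_mem_sphere (extra t).2),
      mul_zero]
  · obtain ⟨j, hj⟩ := b.exists_notMem_affineSpan_facet x
    have hβ_ne : ⟪x, (v j : En n)⟫_ℝ - β j ≠ 0 := sub_ne_zero.mpr fun h => hj ((hmem_facet_iff j x).mp h)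
    refine Finset.sum_pos' (fun i _ => hterm_nonneg x hx i) ⟨j, Finset.mem_univ j, ?_⟩
    exact mul_pos
      (mul_pos (sq_pos_of_ne_zero hβ_ne) (one_sub_inner_pos_of_mem_sphere hx (w j).2 (hxw j)))
      (Finset.prod_pos fun t _ => one_sub_inner_pos_of_mem_sphere hx (extra t).2 (hxe t))
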